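/- Let G be a graph with a distinguished vertex v and let r ≥ 1. Let F be the graph obtained from G by adding 2r new vertices a_1, b_1, …, a_r, b_r and the edges a_i b_i, v a_i, v b_i for 1 ≤ i ≤ r (i.e. F is the coalescence of G at v with the apex of K_1 ∨ rK_2). Then the multiplicity of 1 as an eigenvalue of the signless Laplacian Q(F) is at least r, and the multiplicity of 3 as an eigenvalue of Q(F) is at least r − 1. -/

import Mathlib

open SimpleGraph Finset

namespace Paper

/-- The cone `K₁ ∨ G`: a new apex vertex (`none`) joined to every vertex of `G`. -/
def cone {V : Type*} (G : SimpleGraph V) : SimpleGraph (Option V) where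
  Adj x y :=
    match x, y with
    | none, none => False
    | none, some _ => True
    | some _, none => True
    | some a, some b => G.Adj a b
  symm := by
    refine ⟨?_⟩
    rintro (_ | a) (_ | b) h
    · exact h
    · exact trivial
    · exact trivial
    · exact G.adj_symm h
  loopless := by
    refine ⟨?_⟩
    rintro (_ | a) h
    · exact h
    · exact G.irrefl h

/-- Disjoint union of an indexed family of graphs. -/
def sigmaGraph {ι : Type*} {V : ι → Type*} (G : ∀ i, SimpleGraph (V i)) :
    SimpleGraph (Σ i, V i) where
  Adj x y := ∃ (i : ι) (u v : V i), x = ⟨i, u⟩ ∧ y = ⟨i, v⟩ ∧ (G i).Adj u v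
  symm := by
    refine ⟨?_⟩
    rintro x y ⟨i, u, v, rfl, rfl, h⟩
    exact ⟨i, v, u, rfl, rfl, (G i).adj_symm h⟩
  loopless := by
    refine ⟨?_⟩
    rintro x ⟨i, u, v, rfl, h2, h⟩
    injection h2 with h3 h4
    subst h4
    exact (G i).irrefl h

/-- `q` disjoint copies of `K₂`. -/
def K2s (q : ℕ) : SimpleGraph (Σ _ : Fin q, Fin 2) :=
  sigmaGraph fun _ => (⊤ : SimpleGraph (Fin 2))

/-- The signless Laplacian matrix `Q(G) = D(G) + A(G)`. -/
noncomputable def QMatrix {V : Type*} [Fintype V] (G : SimpleGraph V) : Matrix V V ℝ :=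
  letI := Classical.decEq V
  letI := Classical.decRel G.Adj
  Matrix.diagonal (fun v => (G.degree v : ℝ)) + G.adjMatrix ℝ

/-- The signless Laplacian spectrum, as the multiset of roots of the characteristic
polynomial of `Q(G)` (with multiplicity). -/
noncomputable def Qspectrum {V : Type*} [Fintype V] (G : SimpleGraph V) : Multiset ℝ :=
  letI := Classical.decEq V
  (QMatrix G).charpoly.roots

/-- Multiplicity of `ρ` as a signless Laplacian eigenvalue of `G`. -/
noncomputable def Qmult {V : Type*} [Fintype V] (G : SimpleGraph V) (ρ : ℝ) : ℕ :=
  (Qspectrum G).count ρ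

/-- The `i`-th largest signless Laplacian eigenvalue (1-indexed), i.e. `χ_i(G)`. -/
noncomputable def Qeig {V : Type*} [Fintype V] (G : SimpleGraph V) (i : ℕ) : ℝ :=
  (((Qspectrum G).sort (· ≤ ·)).reverse).getD (i - 1) 0

/-- `G` is determined by its signless Laplacian spectrum. -/
def IsDQS {V : Type*} [Fintype V] (G : SimpleGraph V) : Prop :=
  ∀ (W : Type) [Fintype W] (F : SimpleGraph W),
    Qspectrum F = Qspectrum G → Nonempty (F ≃g G)

/-- The number of subgraphs of `G` isomorphic to `H`. -/
noncomputable def subgraphCount {V W : Type*} (G : SimpleGraph V) (H : SimpleGraph W) : ℕ :=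
  Nat.card {H' : G.Subgraph // Nonempty (H'.coe ≃g H)}

/-- The number of triangle subgraphs of `G` containing a vertex `v`. -/
noncomputable def triangleCountAt {V : Type*} (G : SimpleGraph V) (v : V) : ℕ :=
  Nat.card {H' : G.Subgraph //
    v ∈ H'.verts ∧ Nonempty (H'.coe ≃g (⊤ : SimpleGraph (Fin 3)))}

/-- Vertex degree (with classical decidability). -/
noncomputable def deg {V : Type*} [Fintype V] (G : SimpleGraph V) (v : V) : ℕ :=
  letI := Classical.decRel G.Adj
  G.degree v

/-- The multiset of vertex degrees of `G`. -/
noncomputable def degreeMultiset {V : Type*} [Fintype V] (G : SimpleGraph V) : Multiset ℕ :=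
  (Finset.univ : Finset V).val.map fun v => deg G v

/-- The maximum vertex degree of `G`. -/
noncomputable def maxDeg {V : Type*} [Fintype V] (G : SimpleGraph V) : ℕ :=
  letI := Classical.decRel G.Adj
  G.maxDegree

/-- `S_r(G) = trace(A(G)^r)`, the `r`-th spectral moment. -/
noncomputable def Smoment {V : Type*} [Fintype V] (G : SimpleGraph V) (r : ℕ) : ℝ :=
  letI := Classical.decEq V
  letI := Classical.decRel G.Adj
  ((G.adjMatrix ℝ) ^ r).trace

/-- `T_r(G) = trace(Q(G)^r)`, the `r`-th signless Laplacian spectral moment. -/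
noncomputable def Tmoment {V : Type*} [Fintype V] (G : SimpleGraph V) (r : ℕ) : ℝ :=
  letI := Classical.decEq V
  ((QMatrix G) ^ r).trace

/-- `∑_{uv ∈ E(G)} d_G(u) d_G(v)`. -/
noncomputable def edgeDegSum {V : Type*} [Fintype V] (G : SimpleGraph V) : ℕ :=
  letI := Classical.decEq V
  letI := Classical.decRel G.Adj
  ∑ e ∈ G.edgeFinset,
    Sym2.lift ⟨fun u v => G.degree u * G.degree v, fun _ _ => Nat.mul_comm _ _⟩ e

/-- The coalescence of `G` at `v` with the apex of `K₁ ∨ r K₂`: add `2r` new vertices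
`a_i, b_i` and edges `a_i b_i`, `v a_i`, `v b_i`. -/
def coalescenceK2s {V : Type*} (G : SimpleGraph V) (v : V) (r : ℕ) :
    SimpleGraph (V ⊕ (Fin r × Fin 2)) where
  Adj x y :=
    match x, y with
    | Sum.inl a, Sum.inl b => G.Adj a b
    | Sum.inl a, Sum.inr _ => a = v
    | Sum.inr _, Sum.inl b => b = v
    | Sum.inr p, Sum.inr p' => p.1 = p'.1 ∧ p.2 ≠ p'.2
  symm := by
    refine ⟨?_⟩
    rintro (a | p) (b | p') h
    · exact G.adj_symm h
    · exact h
    · exact h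
    · exact ⟨h.1.symm, h.2.symm⟩
  loopless := by
    refine ⟨?_⟩
    rintro (a | p) h
    · exact G.irrefl h
    · exact h.2 rfl


/-- `K₁ ∨ (C_{k 0} ∪ ⋯ ∪ C_{k (t-1)} ∪ q K₂ ∪ s K₁)`. -/
def coneCycles {t : ℕ} (k : Fin t → ℕ) (q s : ℕ) :
    SimpleGraph (Option ((Σ i, Fin (k i)) ⊕ ((Σ _ : Fin q, Fin 2) ⊕ Fin s))) :=
  cone ((sigmaGraph fun i => cycleGraph (k i)) ⊕g (K2s q ⊕g (⊥ : SimpleGraph (Fin s))))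

/-- `K₁ ∨ (C_k ∪ q K₂ ∪ s K₁)`. -/
def coneOneCycle (k q s : ℕ) :
    SimpleGraph (Option (Fin k ⊕ ((Σ _ : Fin q, Fin 2) ⊕ Fin s))) :=
  cone (cycleGraph k ⊕g (K2s q ⊕g (⊥ : SimpleGraph (Fin s))))

/-- `K₁ ∨ (C₄ ∪ P_{k-3} ∪ P₃ ∪ (q-2) K₂ ∪ s K₁)`. -/
def coneAlt (k q s : ℕ) :
    SimpleGraph (Option (Fin 4 ⊕ (Fin (k - 3) ⊕ (Fin 3 ⊕ ((Σ _ : Fin (q - 2), Fin 2) ⊕ Fin s))))) :=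
  cone (cycleGraph 4 ⊕g (pathGraph (k - 3) ⊕g (pathGraph 3 ⊕g
    (K2s (q - 2) ⊕g (⊥ : SimpleGraph (Fin s))))))

/-- `K₁ ∨ (C₃ ∪ C_{k 0} ∪ ⋯ ∪ C_{k (t'-1)} ∪ q K₂ ∪ s K₁)`. -/
def coneC3Cycles {t' : ℕ} (k : Fin t' → ℕ) (q s : ℕ) :
    SimpleGraph (Option (Fin 3 ⊕ ((Σ i, Fin (k i)) ⊕ ((Σ _ : Fin q, Fin 2) ⊕ Fin s)))) :=
  cone (cycleGraph 3 ⊕g ((sigmaGraph fun i => cycleGraph (k i)) ⊕g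
    (K2s q ⊕g (⊥ : SimpleGraph (Fin s)))))

/-- `K₁ ∨ (K_{1,3} ∪ C_{k 0} ∪ ⋯ ∪ C_{k (t'-1)} ∪ q K₂ ∪ s' K₁)`. -/
def coneStar {t' : ℕ} (k : Fin t' → ℕ) (q s' : ℕ) :
    SimpleGraph (Option ((Fin 1 ⊕ Fin 3) ⊕ ((Σ i, Fin (k i)) ⊕ ((Σ _ : Fin q, Fin 2) ⊕ Fin s')))) :=
  cone (completeBipartiteGraph (Fin 1) (Fin 3) ⊕g ((sigmaGraph fun i => cycleGraph (k i)) ⊕g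
    (K2s q ⊕g (⊥ : SimpleGraph (Fin s')))))

/-- `K₁ ∨ (P_{l 0} ∪ ⋯ ∪ P_{l (q-1)} ∪ s K₁)`. -/
def conePaths {q : ℕ} (l : Fin q → ℕ) (s : ℕ) :
    SimpleGraph (Option ((Σ i, Fin (l i)) ⊕ Fin s)) :=
  cone ((sigmaGraph fun i => pathGraph (l i)) ⊕g (⊥ : SimpleGraph (Fin s)))

/-- `K₁ ∨ (C_{k 0} ∪ ⋯ ∪ C_{k (z-1)} ∪ P_{l 0} ∪ ⋯ ∪ P_{l (q-1)} ∪ s K₁)`. -/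
def coneCyclesPaths {z q : ℕ} (k : Fin z → ℕ) (l : Fin q → ℕ) (s : ℕ) :
    SimpleGraph (Option ((Σ i, Fin (k i)) ⊕ ((Σ i, Fin (l i)) ⊕ Fin s))) :=
  cone ((sigmaGraph fun i => cycleGraph (k i)) ⊕g
    ((sigmaGraph fun i => pathGraph (l i)) ⊕g (⊥ : SimpleGraph (Fin s))))

/-- The quartic polynomial `p_{n,q,s}` from the paper. -/
noncomputable def quartic (n q s : ℕ) (x : ℝ) : ℝ :=
  x ^ 4 - ((n : ℝ) + 8) * x ^ 3 + (8 * (n : ℝ) + 15) * x ^ 2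
    + (4 * (q : ℝ) + 4 * (s : ℝ) - 19 * (n : ℝ) + 4) * x
    + (12 * (n : ℝ) - 4 * (q : ℝ) - 12 * (s : ℝ) - 12)

/-- The multiset `{3 + 2 cos (2jπ/k_i) : 1 ≤ j ≤ k_i - 1, 1 ≤ i ≤ t}`. -/
noncomputable def cycleEigs {t : ℕ} (k : Fin t → ℕ) : Multiset ℝ :=
  ∑ i : Fin t, (Multiset.range (k i - 1)).map
    (fun j => 3 + 2 * Real.cos (2 * ((j : ℝ) + 1) * Real.pi / (k i : ℝ)))

/-!
A vector `x` that vanishes on `V` and is supported on the new vertices `a_i, b_i` is sent by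
`Q(F)` to the vector with entry `2 x(a_i) + x(b_i)` at `a_i` (symmetrically at `b_i`), entry
`∑ x` at `v`, and `0` elsewhere on `V`. So `x(b_i) = -x(a_i)` for all `i` gives an
`r`-dimensional space of eigenvectors for `1`, and `x(b_i) = x(a_i)` with `∑ x = 0` an
`(r - 1)`-dimensional space of eigenvectors for `3`. Geometric multiplicity is bounded by
algebraic multiplicity, i.e. by the multiplicity as a root of the characteristic polynomial.
-/

open Matrix

theorem _root_.Matrix.finrank_eigenspace_mulVecLin_le_count_roots {K n : Type*} [Field K]
    [DecidableEq K] [Fintype n] [DecidableEq n] (A : Matrix n n K) (μ : K) :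
    Module.finrank K (Module.End.eigenspace A.mulVecLin μ) ≤ A.charpoly.roots.count μ := by
  rw [Polynomial.count_roots, ← Matrix.charpoly_mulVecLin]
  exact LinearMap.finrank_eigenspace_le _ μ

theorem finrank_eigenspace_le_Qmult {W : Type*} [Fintype W] (H : SimpleGraph W) (ρ : ℝ) :
    Module.finrank ℝ (Module.End.eigenspace (QMatrix H).mulVecLin ρ) ≤ Qmult H ρ :=
  letI := Classical.decEq W
  (QMatrix H).finrank_eigenspace_mulVecLin_le_count_roots ρ

theorem QMatrix_mulVec_apply {W : Type*} [Fintype W] (H : SimpleGraph W) [DecidableRel H.Adj]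
    (x : W → ℝ) (u : W) :
    (QMatrix H *ᵥ x) u = H.degree u * x u + ∑ w, if H.Adj u w then x w else 0 := by
  classical
  rw [QMatrix, add_mulVec, Pi.add_apply, mulVec_diagonal, adjMatrix_mulVec_apply,
    neighborFinset_eq_filter, Finset.sum_filter]
  congr 2 <;> convert rfl

theorem _root_.Module.finrank_sub_one_le_finrank_ker {K M : Type*} [Field K] [AddCommGroup M]
    [Module K M] [FiniteDimensional K M] (f : M →ₗ[K] K) :
    Module.finrank K M - 1 ≤ Module.finrank K (LinearMap.ker f) := by
  have hrange : Module.finrank K (LinearMap.range f) ≤ 1 :=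
    (Submodule.finrank_le _).trans (Module.finrank_self K).le
  have := f.finrank_range_add_finrank_ker
  omega

section coalescence

variable {V : Type*} (G : SimpleGraph V) (v : V) (r : ℕ)

def triangleVec (s : Fin 2 → ℝ) : (Fin r → ℝ) →ₗ[ℝ] V ⊕ (Fin r × Fin 2) → ℝ :=
  LinearMap.pi (Sum.elim 0 fun p => s p.2 • LinearMap.proj p.1)

@[simp] theorem coalescenceK2s_adj_inl_inr (a : V) (p : Fin r × Fin 2) :
    (coalescenceK2s G v r).Adj (Sum.inl a) (Sum.inr p) ↔ a = v := Iff.rfl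

@[simp] theorem coalescenceK2s_adj_inr_inl (p : Fin r × Fin 2) (a : V) :
    (coalescenceK2s G v r).Adj (Sum.inr p) (Sum.inl a) ↔ a = v := Iff.rfl

theorem coalescenceK2s_adj_inr_inr (p q : Fin r × Fin 2) :
    (coalescenceK2s G v r).Adj (Sum.inr p) (Sum.inr q) ↔ q = (p.1, p.2 + 1) := by
  have hswap : ∀ k l : Fin 2, k ≠ l ↔ l = k + 1 := by decide
  rw [Prod.ext_iff, ← hswap, eq_comm]
  exact Iff.rfl

@[simp] theorem triangleVec_inl (s : Fin 2 → ℝ) (d : Fin r → ℝ) (a : V) :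
    triangleVec r s d (Sum.inl a) = 0 := rfl

@[simp] theorem triangleVec_inr (s : Fin 2 → ℝ) (d : Fin r → ℝ) (p : Fin r × Fin 2) :
    triangleVec (V := V) r s d (Sum.inr p) = s p.2 * d p.1 := rfl

theorem degree_coalescenceK2s_inr [Fintype V] [DecidableRel (coalescenceK2s G v r).Adj]
    (p : Fin r × Fin 2) : (coalescenceK2s G v r).degree (Sum.inr p) = 2 := by
  classical
  rw [← card_neighborFinset_eq_degree, neighborFinset_eq_filter, card_filter,
    Fintype.sum_sum_type]
  simp [coalescenceK2s_adj_inr_inr]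

theorem triangleVec_mem_eigenspace [Fintype V] (s : Fin 2 → ℝ) (μ : ℝ)
    (hs : ∀ k, s (k + 1) = (μ - 2) * s k) (d : Fin r → ℝ)
    (hd : (s 0 + s 1) * ∑ i, d i = 0) :
    triangleVec r s d ∈ Module.End.eigenspace (QMatrix (coalescenceK2s G v r)).mulVecLin μ := by
  classical
  rw [Module.End.mem_eigenspace_iff, mulVecLin_apply]
  ext (a | p) <;> rw [QMatrix_mulVec_apply, Fintype.sum_sum_type]
  · simp only [triangleVec_inl, triangleVec_inr, coalescenceK2s_adj_inl_inr, Pi.smul_apply]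
    simp [Fintype.sum_prod_type_right, ← mul_sum, ← add_mul, hd]
  · simp [coalescenceK2s_adj_inr_inr, degree_coalescenceK2s_inr, hs]
    ring

theorem triangleVec_injective {s : Fin 2 → ℝ} (hs : s 0 ≠ 0) :
    Function.Injective (triangleVec (V := V) r s) := by
  intro d d' h
  funext i
  simpa [hs] using congrFun h (Sum.inr (i, 0))

theorem coalescenceK2s_le_finrank_eigenspace_one [Fintype V] :
    r ≤
      Module.finrank ℝ (Module.End.eigenspace (QMatrix (coalescenceK2s G v r)).mulVecLin 1) := by
  have hmem (d : Fin r → ℝ) := triangleVec_mem_eigenspace G v r ![1, -1] 1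
    (by norm_num [Fin.forall_fin_two, show (1 + 1 : Fin 2) = 0 from rfl]) d (by norm_num)
  have hinj := (LinearMap.injective_codRestrict_iff hmem).mpr (triangleVec_injective r (by simp))
  simpa using LinearMap.finrank_le_finrank_of_injective hinj

theorem coalescenceK2s_sub_one_le_finrank_eigenspace_three [Fintype V] :
    r - 1 ≤
      Module.finrank ℝ (Module.End.eigenspace (QMatrix (coalescenceK2s G v r)).mulVecLin 3) := by
  set sumZero := LinearMap.ker (∑ i, LinearMap.proj i : (Fin r → ℝ) →ₗ[ℝ] ℝ)
  have hmem (d : sumZero) : (triangleVec r 1 ∘ₗ sumZero.subtype) d ∈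
      Module.End.eigenspace (QMatrix (coalescenceK2s G v r)).mulVecLin 3 := by
    have hd : ∑ i, (d : Fin r → ℝ) i = 0 := by
      simpa [-LinearMap.map_coe_ker] using LinearMap.mem_ker.mp d.2
    exact triangleVec_mem_eigenspace G v r 1 3 (by norm_num) d (by simp [hd])
  have hinj := (LinearMap.injective_codRestrict_iff hmem).mpr
    ((triangleVec_injective r (s := 1) one_ne_zero).comp sumZero.injective_subtype)
  calc r - 1 = Module.finrank ℝ (Fin r → ℝ) - 1 := by simp
    _ ≤ Module.finrank ℝ sumZero := Module.finrank_sub_one_le_finrank_ker _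
    _ ≤ _ := LinearMap.finrank_le_finrank_of_injective hinj

end coalescence

theorem coalescence_Qmult_one_three_general {V : Type*} [Fintype V]
    (G : SimpleGraph V) (v : V) (r : ℕ) :
    r ≤ Qmult (coalescenceK2s G v r) 1 ∧ r - 1 ≤ Qmult (coalescenceK2s G v r) 3 :=
  ⟨(coalescenceK2s_le_finrank_eigenspace_one G v r).trans (finrank_eigenspace_le_Qmult _ 1),
    (coalescenceK2s_sub_one_le_finrank_eigenspace_three G v r).trans
      (finrank_eigenspace_le_Qmult _ 3)⟩

/-- Lemma 3.2: if `F` is the coalescence of `G` at `v` with the apex of `K₁ ∨ r K₂`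
(`r ≥ 1`), then `1` is a `Q`-eigenvalue of `F` of multiplicity at least `r` and `3` is a
`Q`-eigenvalue of `F` of multiplicity at least `r - 1`. -/
theorem coalescence_Qmult_one_three {V : Type*} [Fintype V]
    (G : SimpleGraph V) (v : V) (r : ℕ) (hr : 1 ≤ r) :
    r ≤ Qmult (coalescenceK2s G v r) 1 ∧ r - 1 ≤ Qmult (coalescenceK2s G v r) 3 :=
  coalescence_Qmult_one_three_general G v r

end Paper
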